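/- arXiv:2108.12419 — 9 statements merged into one kernel-verified Lean document; each statement's English description precedes it below -/
import Mathlib

section
/- In the two-unit three-period example (unit A treated from period 2, unit B treated from period 3) with expected outcomes E[Y_it] = α_i + β_t + τ_it·D_it where D_it = 1[t ≥ E_i], the static two-way fixed effects OLS estimand equals τ_A2 + (1/2)τ_B3 − (1/2)τ_A3; in particular the long-run effect τ_A3 receives a negative weight −1/2. -/
/-!
Rows and columns of the double-demeaned treatment `D̃` sum to zero, so `D̃` is orthogonal to every
unit and period effect and the numerator of the estimand reduces to `Σ D̃ τ D`. In the staggered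
design `D̃ = (1/6)·[[-1, 2, -1], [1, -2, 1]]` and `Σ D̃² = 1/3`: the treated cell `A3` has negative
`D̃`, because once unit and period effects are removed it serves as a control for `B3`.
-/

open Finset

section DoubleDemean

variable {ι κ : Type*} [Fintype ι] [Fintype κ]

noncomputable def doubleDemean (D : ι → κ → ℝ) (i : ι) (t : κ) : ℝ :=
  D i t - (∑ s, D i s) / Fintype.card κ - (∑ j, D j t) / Fintype.card ι
    + (∑ j, ∑ s, D j s) / (Fintype.card ι * Fintype.card κ)

theorem sum_doubleDemean_right (D : ι → κ → ℝ) (i : ι) : ∑ t, doubleDemean D i t = 0 := by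
  rcases isEmpty_or_nonempty κ with hκ | hκ
  · simp
  have hκ0 : (Fintype.card κ : ℝ) ≠ 0 := by positivity
  simp only [doubleDemean, sum_add_distrib, sum_sub_distrib, sum_const, card_univ, nsmul_eq_mul,
    ← sum_div, sum_comm (γ := κ)]
  field_simp
  ring

theorem sum_doubleDemean_left (D : ι → κ → ℝ) (t : κ) : ∑ i, doubleDemean D i t = 0 := by
  rcases isEmpty_or_nonempty ι with hι | hι
  · simp
  have hι0 : (Fintype.card ι : ℝ) ≠ 0 := by positivity
  simp only [doubleDemean, sum_add_distrib, sum_sub_distrib, sum_const, card_univ, nsmul_eq_mul,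
    ← sum_div]
  field_simp
  ring

theorem sum_doubleDemean_mul_add_add (D : ι → κ → ℝ) (a : ι → ℝ) (b : κ → ℝ) (r : ι → κ → ℝ) :
    ∑ i, ∑ t, doubleDemean D i t * (a i + b t + r i t) = ∑ i, ∑ t, doubleDemean D i t * r i t := by
  have unit_effects : ∑ i, ∑ t, doubleDemean D i t * a i = 0 := by
    simp [← sum_mul, sum_doubleDemean_right]
  have period_effects : ∑ i, ∑ t, doubleDemean D i t * b t = 0 := by
    rw [sum_comm]; simp [← sum_mul, sum_doubleDemean_left]
  simp only [mul_add, sum_add_distrib, unit_effects, period_effects, zero_add]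

end DoubleDemean

theorem doubleDemean_staggered :
    doubleDemean ![![(0 : ℝ), 1, 1], ![0, 0, 1]] = ![![-1/6, 1/3, -1/6], ![1/6, -1/3, 1/6]] := by
  ext i t
  fin_cases i <;> fin_cases t <;> simp [doubleDemean, Fin.sum_univ_succ] <;> norm_num

/-- Two-unit (A = 0, B = 1), three-period (t = 0,1,2 representing 1,2,3)
example: A is treated from the second period, B from the third, so the
treatment indicator is `D i t = 1[t ≥ e i]` with `e 0 = 1`, `e 1 = 2`.
Expected outcomes are `α i + β t + τ i t * D i t`.  The static TWFE OLS
estimand, computed by Frisch–Waugh–Lovell as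
`(Σ D̃ E[Y]) / (Σ D̃²)` with `D̃` the double-demeaned treatment indicator,
equals `τ_{A2} + (1/2) τ_{B3} − (1/2) τ_{A3}` (a weight of −1/2 on the
long-run effect `τ_{A3}`). -/
theorem static_ols_two_by_three
    (α : Fin 2 → ℝ) (β : Fin 3 → ℝ) (τ : Fin 2 → Fin 3 → ℝ)
    (e : Fin 2 → Fin 3) (he : e 0 = 1 ∧ e 1 = 2)
    (D : Fin 2 → Fin 3 → ℝ) (hD : ∀ i t, D i t = if e i ≤ t then 1 else 0)
    (EY : Fin 2 → Fin 3 → ℝ)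
    (hEY : ∀ i t, EY i t = α i + β t + τ i t * D i t)
    (Dbar_unit : Fin 2 → ℝ) (hDu : ∀ i, Dbar_unit i = (∑ t, D i t) / 3)
    (Dbar_per : Fin 3 → ℝ) (hDp : ∀ t, Dbar_per t = (∑ i, D i t) / 2)
    (Dbar : ℝ) (hDb : Dbar = (∑ i, ∑ t, D i t) / 6)
    (Dtil : Fin 2 → Fin 3 → ℝ)
    (hDt : ∀ i t, Dtil i t = D i t - Dbar_unit i - Dbar_per t + Dbar)
    (τstatic : ℝ)
    (hτ : τstatic = (∑ i, ∑ t, Dtil i t * EY i t) / (∑ i, ∑ t, (Dtil i t) ^ 2)) :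
    τstatic = τ 0 1 + (1 / 2) * τ 1 2 - (1 / 2) * τ 0 2 := by
  obtain ⟨he0, he1⟩ := he
  have hD_eq : D = ![![0, 1, 1], ![0, 0, 1]] := by
    ext i t
    fin_cases i <;> fin_cases t <;> simp [hD, he0, he1]
  have hDtil : Dtil = doubleDemean D := by
    ext i t
    simp only [hDt, hDu, hDp, hDb, doubleDemean, Fintype.card_fin]
    norm_num
  have hnum : ∑ i, ∑ t, Dtil i t * EY i t = ∑ i, ∑ t, Dtil i t * (τ i t * D i t) := by
    simp only [hEY, hDtil, sum_doubleDemean_mul_add_add]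
  rw [hτ, hnum, hDtil, hD_eq, doubleDemean_staggered]
  simp [Fin.sum_univ_two, Fin.sum_univ_three]
  ring
end

section
/- If the parallel trends and no-anticipation assumptions hold (so E[Y_it] = α_i + β_t + τ_it D_it), then the static two-way fixed effects OLS estimand can be written as τ^static = Σ_{it∈Ω₁} w_it^OLS τ_it with weights w_it^OLS = D̃_it / Σ_{jt∈Ω} D̃_jt² that do not depend on the outcome realizations, and these weights sum to one: Σ_{it∈Ω₁} w_it^OLS = 1. -/
/-!
Write `D̃` for the residual. Being orthogonal to every unit and every period indicator, `D̃` is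
orthogonal to every additive two-way function `u_i + v_t` on `Ω`. Since `E[Y] - τ D` and
`D - D̃` are such functions, `Σ D̃ E[Y] = Σ D̃ τ D = Σ_{Ω₁} D̃ τ` and `Σ D̃² = Σ D̃ D = Σ_{Ω₁} D̃`.
-/

open Finset

theorem Finset.sum_comp_mul_eq_zero_of_sum_fiber_eq_zero {α β R : Type*} [DecidableEq β]
    [NonUnitalNonAssocSemiring R] {s : Finset α} {f : α → β} {x : α → R}
    (hx : ∀ b, ∑ a ∈ s with f a = b, x a = 0) (g : β → R) :
    ∑ a ∈ s, g (f a) * x a = 0 := by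
  rw [← sum_fiberwise_of_maps_to (g := f) (t := s.image f) fun a ha => mem_image_of_mem f ha]
  refine sum_eq_zero fun b _ => ?_
  calc ∑ a ∈ s with f a = b, g (f a) * x a
      = ∑ a ∈ s with f a = b, g b * x a :=
        sum_congr rfl fun a ha => by rw [(mem_filter.1 ha).2]
    _ = 0 := by rw [← mul_sum, hx b, mul_zero]

section TwoWay

variable {ι σ R : Type*} [DecidableEq ι] [DecidableEq σ] [CommRing R]
  {s : Finset (ι × σ)} {x : ι × σ → R}

theorem sum_twoWay_mul_eq_zero (hunit : ∀ i, ∑ p ∈ s with p.1 = i, x p = 0)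
    (hper : ∀ t, ∑ p ∈ s with p.2 = t, x p = 0) (u : ι → R) (v : σ → R) :
    ∑ p ∈ s, (u p.1 + v p.2) * x p = 0 := by
  simp only [add_mul, sum_add_distrib, sum_comp_mul_eq_zero_of_sum_fiber_eq_zero hunit,
    sum_comp_mul_eq_zero_of_sum_fiber_eq_zero hper, add_zero]

theorem sum_mul_eq_sum_mul_of_eq_add_twoWay (hunit : ∀ i, ∑ p ∈ s with p.1 = i, x p = 0)
    (hper : ∀ t, ∑ p ∈ s with p.2 = t, x p = 0) {y z : ι × σ → R} {u : ι → R} {v : σ → R}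
    (hyz : ∀ p ∈ s, y p = z p + (u p.1 + v p.2)) :
    ∑ p ∈ s, x p * y p = ∑ p ∈ s, x p * z p := by
  calc ∑ p ∈ s, x p * y p
      = ∑ p ∈ s, x p * z p + ∑ p ∈ s, (u p.1 + v p.2) * x p := by
        rw [← sum_add_distrib]
        exact sum_congr rfl fun p hp => by rw [hyz p hp]; ring
    _ = ∑ p ∈ s, x p * z p := by rw [sum_twoWay_mul_eq_zero hunit hper, add_zero]

end TwoWay

/-- Under parallel trends and no anticipation (`E[Y_it] = α_i + β_t + τ_it D_it`),
the static TWFE OLS estimand is a weighted sum of treatment effects over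
treated observations with weights `w_it = D̃_it / Σ D̃²` that do not depend on
outcome realizations, and these weights sum to one.  Here `D̃` is the residual
of the treatment indicator from the projection on unit and period indicators:
it differs from `D` by an additive unit term plus period term, and is
orthogonal to all unit and period indicators over `Ω`. -/
theorem static_ols_weighted_sum {ι σ : Type*} [DecidableEq ι] [DecidableEq σ]
    (Ω : Finset (ι × σ)) (D : ι → σ → Bool)
    (Dind : ι → σ → ℝ) (hDind : ∀ i t, Dind i t = if D i t then 1 else 0)
    (α : ι → ℝ) (β : σ → ℝ) (τ : ι → σ → ℝ)
    (EY : ι → σ → ℝ) (hEY : ∀ i t, EY i t = α i + β t + τ i t * Dind i t)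
    (Dtil : ι → σ → ℝ)
    -- D̃ is D minus a two-way fixed effects fit:
    (a : ι → ℝ) (b : σ → ℝ)
    (hfit : ∀ p ∈ Ω, Dtil p.1 p.2 = Dind p.1 p.2 - a p.1 - b p.2)
    -- orthogonality to unit indicators:
    (horth_unit : ∀ i, ∑ p ∈ Ω.filter (fun p => p.1 = i), Dtil p.1 p.2 = 0)
    -- orthogonality to period indicators:
    (horth_per : ∀ t, ∑ p ∈ Ω.filter (fun p => p.2 = t), Dtil p.1 p.2 = 0)
    (hden : ∑ p ∈ Ω, (Dtil p.1 p.2) ^ 2 ≠ 0)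
    (τstatic : ℝ)
    (hτ : τstatic = (∑ p ∈ Ω, Dtil p.1 p.2 * EY p.1 p.2)
        / (∑ p ∈ Ω, (Dtil p.1 p.2) ^ 2))
    (w : ι → σ → ℝ)
    (hw : ∀ i t, w i t = Dtil i t / ∑ p ∈ Ω, (Dtil p.1 p.2) ^ 2) :
    τstatic = ∑ p ∈ Ω.filter (fun p => D p.1 p.2), w p.1 p.2 * τ p.1 p.2 ∧
      ∑ p ∈ Ω.filter (fun p => D p.1 p.2), w p.1 p.2 = 1 := by
  have sum_treated (f : ι × σ → ℝ) :
      ∑ p ∈ Ω with D p.1 p.2, f p = ∑ p ∈ Ω, f p * Dind p.1 p.2 := by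
    rw [sum_filter]
    exact sum_congr rfl fun p _ => by rw [hDind, mul_boole]
  have hnum : ∑ p ∈ Ω, Dtil p.1 p.2 * EY p.1 p.2
      = ∑ p ∈ Ω with D p.1 p.2, Dtil p.1 p.2 * τ p.1 p.2 := by
    rw [sum_treated]
    simp_rw [mul_assoc]
    exact sum_mul_eq_sum_mul_of_eq_add_twoWay horth_unit horth_per fun p _ => by
      rw [hEY]; ring
  have hden_treated : ∑ p ∈ Ω with D p.1 p.2, Dtil p.1 p.2 = ∑ p ∈ Ω, Dtil p.1 p.2 ^ 2 := by
    rw [sum_treated]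
    simp_rw [sq]
    exact sum_mul_eq_sum_mul_of_eq_add_twoWay horth_unit horth_per (u := a) (v := b)
      fun p hp => by rw [hfit p hp]; ring
  constructor
  · rw [hτ, hnum, sum_div]
    exact sum_congr rfl fun p _ => by rw [hw, div_mul_eq_mul_div]
  · simp_rw [hw, ← sum_div, hden_treated, div_self hden]
end

section
/- Suppose there are no never-treated units and let H̄ = max_i E_i − min_i E_i. Then for any non-negative weights w_it, not all zero, supported on observations with K_it ≥ H̄, the weighted sum Σ_{it: K_it ≥ H̄} w_it τ_it is not identified under parallel trends and no anticipation: there exist two data-generating processes with identical distributions of observed outcomes but different values of the weighted sum. -/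
/-!
Once every unit is treated, a period effect `β_t` and a common treatment effect `τ_{it}` enter
the mean outcome only through their sum. Weights supported at relative times `K_it ≥ H̄` sit in
periods `t ≥ max_i E_i`, where all units are treated, so moving mass `κ` from `β_{t₀}` to every
`τ_{i,t₀}` leaves all mean outcomes unchanged but moves the weighted sum by `κ` times the
(positive) total weight of period `t₀`.
-/

open Finset

theorem le_of_sup'_sub_inf'_le_sub {ι α : Type*} [AddCommGroup α] [LinearOrder α]
    [IsOrderedAddMonoid α] {s : Finset ι} (hs : s.Nonempty) (E : ι → α) {i j : ι}
    (hi : i ∈ s) (hj : j ∈ s) {t : α} (h : s.sup' hs E - s.inf' hs E ≤ t - E j) :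
    E i ≤ t := by
  have hspread : E i - E j ≤ s.sup' hs E - s.inf' hs E :=
    sub_le_sub (le_sup' E hi) (inf'_le E hj)
  simpa using hspread.trans h

theorem mean_outcome_eq_of_period_shift {ι T : Type*} (α : ι → ℝ) (β : T → ℝ)
    (τ D : ι → T → ℝ) (κ : T → ℝ) {i : ι} {t : T} (htreated : κ t ≠ 0 → D i t = 1) :
    α i + β t + τ i t * D i t = α i + (β t - κ t) + (τ i t + κ t) * D i t := by
  by_cases hκ : κ t = 0
  · simp [hκ]
  · rw [htreated hκ]
    ring

/-- Non-identification of long-run effects: with no never-treated units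
(finitely many units, each with an integer event date `E i`), let
`H̄ = max E − min E`.  For any non-negative weights `w`, supported on
observations in `Ω` with relative time `K_it = t − E i ≥ H̄` and not all zero,
the weighted sum `Σ w_it τ_it` is not identified under parallel trends and no
anticipation: there are two parameter configurations `(α, β, τ)` and
`(α', β', τ')` generating identical mean observed outcomes
`α_i + β_t + τ_it D_it` on all of `Ω` but different values of the weighted
sum. -/
theorem longrun_not_identified {ι : Type*} [Fintype ι] [Nonempty ι]
    (Ω : Finset (ι × ℤ)) (E : ι → ℤ)
    (Hbar : ℤ)
    (hHbar : Hbar = Finset.univ.sup' Finset.univ_nonempty E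
        - Finset.univ.inf' Finset.univ_nonempty E)
    (D : ι → ℤ → ℝ) (hD : ∀ i t, D i t = if E i ≤ t then 1 else 0)
    (w : ι → ℤ → ℝ)
    (hw_nonneg : ∀ i t, 0 ≤ w i t)
    (hw_supp : ∀ i t, w i t ≠ 0 → (i, t) ∈ Ω ∧ Hbar ≤ t - E i)
    (hw_ne : ∃ i t, w i t ≠ 0) :
    ∃ (α : ι → ℝ) (β : ℤ → ℝ) (τ : ι → ℤ → ℝ)
      (α' : ι → ℝ) (β' : ℤ → ℝ) (τ' : ι → ℤ → ℝ),
      (∀ p ∈ Ω, α p.1 + β p.2 + τ p.1 p.2 * D p.1 p.2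
          = α' p.1 + β' p.2 + τ' p.1 p.2 * D p.1 p.2) ∧
      (∑ p ∈ Ω, w p.1 p.2 * τ p.1 p.2) ≠ (∑ p ∈ Ω, w p.1 p.2 * τ' p.1 p.2) := by
  obtain ⟨i₀, t₀, hw₀⟩ := hw_ne
  obtain ⟨hmem, hlate⟩ := hw_supp i₀ t₀ hw₀
  have htreated : ∀ i, D i t₀ = 1 := fun i => by
    rw [hD, if_pos (le_of_sup'_sub_inf'_le_sub _ E (mem_univ i) (mem_univ i₀) (hHbar ▸ hlate))]
  let κ : ℤ → ℝ := fun t => if t = t₀ then 1 else 0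
  refine ⟨0, 0, 0, 0, 0 - κ, fun _ => 0 + κ, fun p _ => ?_, ?_⟩
  · refine mean_outcome_eq_of_period_shift 0 0 0 D κ fun hκ => ?_
    rw [show p.2 = t₀ by simpa [κ] using hκ]
    exact htreated p.1
  · have hpos : 0 < ∑ p ∈ Ω, w p.1 p.2 * κ p.2 :=
      sum_pos' (fun p _ => mul_nonneg (hw_nonneg _ _) (by positivity))
        ⟨(i₀, t₀), hmem, by simpa [κ] using (hw_nonneg i₀ t₀).lt_of_ne' hw₀⟩
    simpa using hpos.ne
end

section
/- In the model Y = Zπ + Dτ + ε with unrestricted treatment effects τ ∈ ℝ^{N₁} (i.e., Γ = I), the OLS estimator of τ equals the imputation estimator: τ̂ = Y₁ − Z₁π̂₀, where π̂₀ is the OLS estimator of π computed from untreated observations only (regressing Y₀ on Z₀). Consequently, for any weights w₁, the efficient linear unbiased estimator of w₁'τ is w₁'(Y₁ − Z₁π̂₀). -/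
/-!
The imputation coefficients `b = (π̂₀, Y₁ − Z₁π̂₀)` fit every treated row exactly, because the
treatment dummies `D = (I; 0)` absorb them; so the residual `Y − Gb` is `0` on the treated rows and
the untreated residual `Y₀ − Z₀π̂₀` on the others. Applying `Gᵀ` gives `(Z₀ᵀ(Y₀ − Z₀π̂₀), 0) = 0` by
the normal equations of the untreated regression, so `b` solves the normal equations of the full
regression and, `GᵀG` being invertible, is its OLS estimate.
-/

open Matrix

variable {R : Type*} [CommRing R]

namespace Matrix

noncomputable def ols {m n : Type*} [Fintype m] [Fintype n] [DecidableEq n]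
    (G : Matrix m n R) (y : m → R) : n → R :=
  (Gᵀ * G)⁻¹ *ᵥ (Gᵀ *ᵥ y)

section OLS

variable {m n : Type*} [Fintype m] [Fintype n] [DecidableEq n]

theorem transpose_mulVec_sub_mulVec_ols {G : Matrix m n R} (hG : IsUnit (Gᵀ * G).det)
    (y : m → R) : Gᵀ *ᵥ (y - G *ᵥ ols G y) = 0 := by
  rw [mulVec_sub, mulVec_mulVec, ols, mulVec_mulVec, mul_nonsing_inv _ hG, one_mulVec,
    sub_self]

theorem ols_eq_of_transpose_mulVec_sub_eq_zero {G : Matrix m n R} (hG : IsUnit (Gᵀ * G).det)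
    {y : m → R} {b : n → R} (hb : Gᵀ *ᵥ (y - G *ᵥ b) = 0) : ols G y = b := by
  rw [mulVec_sub, mulVec_mulVec, sub_eq_zero] at hb
  rw [ols, hb, mulVec_mulVec, nonsing_inv_mul _ hG, one_mulVec]

end OLS

section Imputation

variable {m₁ m₀ p : Type*} [Fintype m₁] [DecidableEq m₁]

theorem fromBlocks_one_zero_mulVec_imputation [Fintype p] (Z₁ : Matrix m₁ p R)
    (Z₀ : Matrix m₀ p R) (π : p → R) (y₁ : m₁ → R) :
    fromBlocks Z₁ 1 Z₀ 0 *ᵥ Sum.elim π (y₁ - Z₁ *ᵥ π) = Sum.elim y₁ (Z₀ *ᵥ π) := by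
  simp [fromBlocks_mulVec]

theorem fromBlocks_one_zero_transpose_mulVec_elim_zero [Fintype m₀] (Z₁ : Matrix m₁ p R)
    (Z₀ : Matrix m₀ p R) (r : m₀ → R) :
    (fromBlocks Z₁ (1 : Matrix m₁ m₁ R) Z₀ 0)ᵀ *ᵥ Sum.elim 0 r = Sum.elim (Z₀ᵀ *ᵥ r) 0 := by
  simp [fromBlocks_transpose, fromBlocks_mulVec]

end Imputation

end Matrix

/-- Imputation form of the unrestricted OLS estimator.  In the model
`Y = Zπ + Dτ + ε` with unrestricted treatment effects (`Γ = I`), with rows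
split into treated (`Fin N₁`) and untreated (`Fin N₀`) blocks,
`D = (I; 0)`, the full design `G = (Z₁ I; Z₀ 0)` of full column rank:
the OLS estimator of `τ` (the `Sum.inr` block of the OLS coefficient vector)
equals the imputation estimator `Y₁ − Z₁ π̂₀`, where
`π̂₀ = (Z₀'Z₀)⁻¹ Z₀' Y₀` is OLS on the untreated observations only.
Consequently `w₁'τ̂ = w₁'(Y₁ − Z₁π̂₀)` for any weights `w₁`. -/
theorem ols_is_imputation (N₁ N₀ p : ℕ)
    (Z₁ : Matrix (Fin N₁) (Fin p) ℝ) (Z₀ : Matrix (Fin N₀) (Fin p) ℝ)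
    (G : Matrix (Fin N₁ ⊕ Fin N₀) (Fin p ⊕ Fin N₁) ℝ)
    (hG : G = Matrix.fromBlocks Z₁ (1 : Matrix (Fin N₁) (Fin N₁) ℝ) Z₀ 0)
    (hrank : IsUnit (Gᵀ * G).det)
    (hZ₀ : IsUnit (Z₀ᵀ * Z₀).det)
    (Y₁ : Fin N₁ → ℝ) (Y₀ : Fin N₀ → ℝ)
    (bhat : Fin p ⊕ Fin N₁ → ℝ)
    (hbhat : bhat = (Gᵀ * G)⁻¹ *ᵥ (Gᵀ *ᵥ Sum.elim Y₁ Y₀))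
    (τhat : Fin N₁ → ℝ) (hτhat : τhat = fun j => bhat (Sum.inr j))
    (πhat₀ : Fin p → ℝ)
    (hπhat₀ : πhat₀ = (Z₀ᵀ * Z₀)⁻¹ *ᵥ (Z₀ᵀ *ᵥ Y₀)) :
    τhat = Y₁ - Z₁ *ᵥ πhat₀ ∧
      ∀ w₁ : Fin N₁ → ℝ, w₁ ⬝ᵥ τhat = w₁ ⬝ᵥ (Y₁ - Z₁ *ᵥ πhat₀) := by
  have hπ : Z₀ᵀ *ᵥ (Y₀ - Z₀ *ᵥ πhat₀) = 0 := hπhat₀ ▸ transpose_mulVec_sub_mulVec_ols hZ₀ Y₀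
  have hresidual : Sum.elim Y₁ Y₀ - G *ᵥ Sum.elim πhat₀ (Y₁ - Z₁ *ᵥ πhat₀) =
      Sum.elim (0 : Fin N₁ → ℝ) (Y₀ - Z₀ *ᵥ πhat₀) := by
    rw [hG, fromBlocks_one_zero_mulVec_imputation, ← Sum.elim_sub_sub, sub_self]
  have hb : bhat = Sum.elim πhat₀ (Y₁ - Z₁ *ᵥ πhat₀) := by
    refine hbhat.trans (ols_eq_of_transpose_mulVec_sub_eq_zero hrank ?_)
    rw [hresidual, hG, fromBlocks_one_zero_transpose_mulVec_elim_zero, hπ, Sum.elim_zero_zero]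
  have hτ : τhat = Y₁ - Z₁ *ᵥ πhat₀ := by
    rw [hτhat, hb]
    rfl
  exact ⟨hτ, fun w₁ => by rw [hτ]⟩
end

section
/- Any linear estimator τ̂_w = u'Y₁ + v'Y₀ that is unbiased for τ_w = w₁'τ under the model E[Y₁] = Z₁π + τ and E[Y₀] = Z₀π, for all (π, τ), can be written as an imputation estimator: there exists a matrix V with τ̂_w = w₁'(Y₁ − VY₀), where Ĉ = VY₀ is a linear estimator of Z₁π depending only on untreated outcomes and satisfying E[VY₀] = Z₁π for all π. -/
open Matrix

/-- Imputation representation for all linear unbiased estimators (unrestricted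
treatment effects).  If `τ̂_w = u'Y₁ + v'Y₀` is unbiased for `τ_w = w₁'τ`
under `E[Y₁] = Z₁π + τ`, `E[Y₀] = Z₀π` for all `(π, τ)` (with `w₁ ≠ 0` and
`Z₀` of full column rank), then there is a matrix `V` such that
`τ̂_w = w₁'(Y₁ − V Y₀)` identically in `(Y₁, Y₀)`, where the imputation
`Ĉ = V Y₀` depends only on untreated outcomes and is unbiased for `Z₁π`:
`V (Z₀ π) = Z₁ π` for all `π`. -/
theorem unbiased_linear_is_imputation (N₁ N₀ p : ℕ)
    (Z₁ : Matrix (Fin N₁) (Fin p) ℝ) (Z₀ : Matrix (Fin N₀) (Fin p) ℝ)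
    (hZ₀ : IsUnit (Z₀ᵀ * Z₀).det)
    (w₁ : Fin N₁ → ℝ) (hw₁ : w₁ ≠ 0)
    (u : Fin N₁ → ℝ) (v : Fin N₀ → ℝ)
    (hunbiased : ∀ (π : Fin p → ℝ) (τ : Fin N₁ → ℝ),
      u ⬝ᵥ (Z₁ *ᵥ π + τ) + v ⬝ᵥ (Z₀ *ᵥ π) = w₁ ⬝ᵥ τ) :
    ∃ V : Matrix (Fin N₁) (Fin N₀) ℝ,
      (∀ (Y₁ : Fin N₁ → ℝ) (Y₀ : Fin N₀ → ℝ),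
        u ⬝ᵥ Y₁ + v ⬝ᵥ Y₀ = w₁ ⬝ᵥ (Y₁ - V *ᵥ Y₀)) ∧
      (∀ π : Fin p → ℝ, V *ᵥ (Z₀ *ᵥ π) = Z₁ *ᵥ π) := by
  have hu : u = w₁ := by
    funext i
    have h := hunbiased 0 (Pi.single i 1)
    simpa using h
  have hrow : w₁ ᵥ* Z₁ + v ᵥ* Z₀ = 0 := by
    funext j
    have h := hunbiased (Pi.single j 1) 0
    simp [hu, dotProduct_mulVec] at h
    exact h
  set G := (Z₀ᵀ * Z₀)⁻¹ with hGdef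
  have hG : G * (Z₀ᵀ * Z₀) = 1 := Matrix.nonsing_inv_mul _ hZ₀
  have hZZ : (Z₁ * G * Z₀ᵀ) * Z₀ = Z₁ := by
    calc (Z₁ * G * Z₀ᵀ) * Z₀ = Z₁ * (G * (Z₀ᵀ * Z₀)) := by
          simp [Matrix.mul_assoc]
      _ = Z₁ := by rw [hG, Matrix.mul_one]
  set s : Fin N₀ → ℝ := -(v + w₁ ᵥ* (Z₁ * G * Z₀ᵀ)) with hsdef
  set a : Fin N₁ → ℝ := (w₁ ⬝ᵥ w₁)⁻¹ • w₁ with hadef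
  have hwa : w₁ ⬝ᵥ a = 1 := by
    have hne : w₁ ⬝ᵥ w₁ ≠ 0 := by
      simpa [dotProduct_self_eq_zero] using hw₁
    simp [hadef, dotProduct_smul, smul_eq_mul]
    field_simp
  have hsZ : s ᵥ* Z₀ = 0 := by
    have h1 : (w₁ ᵥ* (Z₁ * G * Z₀ᵀ)) ᵥ* Z₀ = w₁ ᵥ* Z₁ := by
      rw [Matrix.vecMul_vecMul, hZZ]
    rw [hsdef]
    rw [Matrix.neg_vecMul, Matrix.add_vecMul, h1]
    have h2 : v ᵥ* Z₀ + w₁ ᵥ* Z₁ = 0 := by rw [add_comm]; exact hrow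
    rw [h2, neg_zero]
  refine ⟨Z₁ * G * Z₀ᵀ + vecMulVec a s, ?_, ?_⟩
  · intro Y₁ Y₀
    have hwV : w₁ ᵥ* (Z₁ * G * Z₀ᵀ + vecMulVec a s) = -v := by
      funext j
      simp [Matrix.vecMul_add, Pi.add_apply]
      have : (w₁ ᵥ* vecMulVec a s) j = (w₁ ⬝ᵥ a) * s j := by
        simp [Matrix.vecMul, vecMulVec_apply, dotProduct, Finset.sum_mul, mul_assoc]
      rw [this, hwa, one_mul, hsdef]
      simp
    rw [hu, dotProduct_sub, dotProduct_mulVec, hwV]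
    simp
  · intro π
    rw [Matrix.mulVec_mulVec, Matrix.add_mul, hZZ]
    have h0 : vecMulVec a s * Z₀ = 0 := by
      ext i k
      have : (vecMulVec a s * Z₀) i k = a i * (s ᵥ* Z₀) k := by
        simp [Matrix.mul_apply, vecMulVec_apply, Matrix.vecMul, dotProduct, Finset.mul_sum, mul_assoc]
      rw [this, hsZ]
      simp
    rw [h0, add_zero]
end

section
/- Any linear estimator τ̂_w = u'Y₁ + v'Y₀ that is unbiased for τ_w = w₁'τ under the restricted model τ = Γθ (for all π, θ) satisfies Γ'u = Γ'w₁ and u'Z₁ + v'Z₀ = 0; consequently τ̂_w is an unbiased estimator of the alternatively weighted estimand τ_ũ = u'τ under unrestricted treatment effects, and τ_ũ = τ_w whenever τ = Γθ holds. -/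
open Matrix

/-! Write the expectation of `u'Y₁ + v'Y₀` under `E[Y₁] = Z₁π + τ`, `E[Y₀] = Z₀π` as
`(u'Z₁ + v'Z₀)π + u'τ`. Unbiasedness for `w₁'Γθ` at `θ = 0` forces the linear form
`(u'Z₁ + v'Z₀)π` to vanish for every `π`, and at `π = 0` it gives `u'Γθ = w₁'Γθ` for every `θ`;
the coefficients of these linear forms are the two identities, and the decomposition then
shows unbiasedness for `u'τ` with `τ` unrestricted. -/

theorem dotProduct_mulVec_add_add_dotProduct_mulVec {R m₁ m₀ n : Type*} [NonUnitalSemiring R]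
    [Fintype m₁] [Fintype m₀] [Fintype n] (u : m₁ → R) (v : m₀ → R)
    (Z₁ : Matrix m₁ n R) (Z₀ : Matrix m₀ n R) (π : n → R) (τ : m₁ → R) :
    u ⬝ᵥ (Z₁ *ᵥ π + τ) + v ⬝ᵥ (Z₀ *ᵥ π) = (u ᵥ* Z₁ + v ᵥ* Z₀) ⬝ᵥ π + u ⬝ᵥ τ := by
  rw [dotProduct_add, dotProduct_mulVec, dotProduct_mulVec, add_dotProduct]
  abel

/-- Imputation representation with a non-trivial treatment-effect model.
If `τ̂_w = u'Y₁ + v'Y₀` is unbiased for `τ_w = w₁'Γθ` under the restricted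
model `E[Y₁] = Z₁π + Γθ`, `E[Y₀] = Z₀π` for all `(π, θ)`, then
`Γ'u = Γ'w₁` and `u'Z₁ + v'Z₀ = 0`; consequently `τ̂_w` is unbiased for the
alternatively weighted estimand `τ_ũ = u'τ` under unrestricted treatment
effects, and the two estimands agree whenever `τ = Γθ`. -/
theorem restricted_unbiased_reweighting (N₁ N₀ p k : ℕ)
    (Z₁ : Matrix (Fin N₁) (Fin p) ℝ) (Z₀ : Matrix (Fin N₀) (Fin p) ℝ)
    (Γ : Matrix (Fin N₁) (Fin k) ℝ)
    (w₁ : Fin N₁ → ℝ) (u : Fin N₁ → ℝ) (v : Fin N₀ → ℝ)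
    (hunbiased : ∀ (π : Fin p → ℝ) (θ : Fin k → ℝ),
      u ⬝ᵥ (Z₁ *ᵥ π + Γ *ᵥ θ) + v ⬝ᵥ (Z₀ *ᵥ π) = w₁ ⬝ᵥ (Γ *ᵥ θ)) :
    Γᵀ *ᵥ u = Γᵀ *ᵥ w₁ ∧
    u ᵥ* Z₁ + v ᵥ* Z₀ = 0 ∧
    (∀ (π : Fin p → ℝ) (τ : Fin N₁ → ℝ),
      u ⬝ᵥ (Z₁ *ᵥ π + τ) + v ⬝ᵥ (Z₀ *ᵥ π) = u ⬝ᵥ τ) ∧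
    (∀ θ : Fin k → ℝ, u ⬝ᵥ (Γ *ᵥ θ) = w₁ ⬝ᵥ (Γ *ᵥ θ)) := by
  simp only [dotProduct_mulVec_add_add_dotProduct_mulVec] at hunbiased ⊢
  have hθ : ∀ θ, u ⬝ᵥ (Γ *ᵥ θ) = w₁ ⬝ᵥ (Γ *ᵥ θ) := fun θ => by
    simpa using hunbiased 0 θ
  have hπ : u ᵥ* Z₁ + v ᵥ* Z₀ = 0 := dotProduct_eq_zero _ fun π => by
    simpa using hunbiased π 0
  refine ⟨?_, hπ, fun π τ => by rw [hπ, zero_dotProduct, zero_add], hθ⟩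
  rw [mulVec_transpose, mulVec_transpose]
  exact dotProduct_eq _ _ fun θ => by simpa only [dotProduct_mulVec] using hθ θ
end

section
/- In the general model with treatment-effect restrictions τ = Γθ, the OLS-based efficient estimator has weight vector v* = (B₁; B₀) Γ (Γ'B₁Γ)⁻¹ Γ' w₁, where B₁ = I − Z₁(Z'Z)⁻¹Z₁' and B₀ = −Z₀(Z'Z)⁻¹Z₁'. Moreover, when Γ is invertible, B₀B₁⁻¹ = −Z₀(Z₀'Z₀)⁻¹Z₁', so the weights simplify to v₁* = w₁ and v₀* = −Z₀(Z₀'Z₀)⁻¹Z₁'w₁. -/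
/-!
By Frisch–Waugh–Lovell, the `θ`-block of the OLS coefficient for the design `(Z, DΓ)` is
`(Γ'D'B_Z DΓ)⁻¹ Γ'D'B_Z Y`; it is read off from the Schur complement of `Z'Z` in the Gram
matrix. Since `B_Z` is symmetric, `B_Z D = (B₁; B₀)` and `D'B_Z D = B₁`, moving everything onto
`Y` gives the weights `v*`. The identity `Z₁'B₁ = Z₀'Z₀ (Z'Z)⁻¹ Z₁'`, a rewriting of
`Z'Z = Z₁'Z₁ + Z₀'Z₀`, gives `B₀ = -Z₀(Z₀'Z₀)⁻¹Z₁' B₁`; and for invertible `Γ` the weights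
collapse because `Γ(Γ'B₁Γ)⁻¹Γ' = B₁⁻¹`.
-/

open Matrix

namespace Matrix

variable {R : Type*} [CommRing R]

section SchurComplement

variable {p q : Type*} [Fintype p] [Fintype q] [DecidableEq p] [DecidableEq q]

theorem inv_fromBlocks_of_isUnit_det₁₁ {A : Matrix p p R} {B : Matrix p q R} {C : Matrix q p R}
    {D : Matrix q q R} (hA : IsUnit A.det) (hS : IsUnit (D - C * A⁻¹ * B).det) :
    (fromBlocks A B C D)⁻¹ =
      fromBlocks (A⁻¹ + A⁻¹ * B * (D - C * A⁻¹ * B)⁻¹ * C * A⁻¹)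
        (-(A⁻¹ * B * (D - C * A⁻¹ * B)⁻¹)) (-((D - C * A⁻¹ * B)⁻¹ * C * A⁻¹))
        (D - C * A⁻¹ * B)⁻¹ := by
  let := invertibleOfIsUnitDet A hA
  let : Invertible (D - C * ⅟A * B) := by
    rw [invOf_eq_nonsing_inv]
    exact invertibleOfIsUnitDet _ hS
  let := fromBlocks₁₁Invertible A B C D
  rw [← invOf_eq_nonsing_inv, invOf_fromBlocks₁₁_eq]
  simp only [invOf_eq_nonsing_inv]

end SchurComplement

section Regression

variable {m n p q k : Type*} [Fintype m] [Fintype p] [DecidableEq m] [DecidableEq p]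

/-- The paper's `B_X`. -/
noncomputable def residualMaker (X : Matrix m p R) : Matrix m m R := 1 - X * (Xᵀ * X)⁻¹ * Xᵀ

noncomputable def olsCoeff (X : Matrix m p R) (Y : m → R) : p → R := (Xᵀ * X)⁻¹ *ᵥ (Xᵀ *ᵥ Y)

theorem transpose_residualMaker (X : Matrix m p R) : (residualMaker X)ᵀ = residualMaker X := by
  have hgram : ((Xᵀ * X)⁻¹)ᵀ = (Xᵀ * X)⁻¹ := by
    rw [transpose_nonsing_inv, transpose_mul, transpose_transpose]
  rw [residualMaker, transpose_sub, transpose_one, transpose_mul, transpose_mul,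
    transpose_transpose, hgram, Matrix.mul_assoc]

theorem transpose_mul_residualMaker_mul (X : Matrix m p R) (W : Matrix m q R) :
    Wᵀ * residualMaker X * W = Wᵀ * W - Wᵀ * X * (Xᵀ * X)⁻¹ * (Xᵀ * W) := by
  simp only [residualMaker, Matrix.mul_sub, Matrix.sub_mul, Matrix.mul_one, Matrix.mul_assoc]

variable [Fintype q] [DecidableEq q]

theorem frisch_waugh_lovell (X : Matrix m p R) (W : Matrix m q R) (Y : m → R)
    (hX : IsUnit (Xᵀ * X).det) (hW : IsUnit (Wᵀ * residualMaker X * W).det) :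
    olsCoeff (fromCols X W) Y ∘ Sum.inr =
      (Wᵀ * residualMaker X * W)⁻¹ *ᵥ (Wᵀ *ᵥ (residualMaker X *ᵥ Y)) := by
  have hWM : Wᵀ *ᵥ (residualMaker X *ᵥ Y) = Wᵀ *ᵥ Y - (Wᵀ * X * (Xᵀ * X)⁻¹) *ᵥ (Xᵀ *ᵥ Y) := by
    simp only [residualMaker, sub_mulVec, one_mulVec, mulVec_sub, mulVec_mulVec, Matrix.mul_assoc]
  rw [transpose_mul_residualMaker_mul] at hW ⊢
  rw [olsCoeff, transpose_fromCols, fromRows_mul_fromCols, inv_fromBlocks_of_isUnit_det₁₁ hX hW,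
    fromRows_mulVec, fromBlocks_mulVec, hWM]
  simp only [Sum.elim_comp_inl, Sum.elim_comp_inr, Matrix.neg_mul, neg_mulVec, mulVec_sub,
    mulVec_mulVec, Matrix.mul_assoc]
  abel

theorem dotProduct_mulVec_olsCoeff_inr [Fintype n] [Fintype k] [DecidableEq k] (X : Matrix m p R)
    (D : Matrix m n R) (Γ : Matrix n k R) (w : n → R) (Y : m → R) (hX : IsUnit (Xᵀ * X).det)
    (hS : IsUnit ((D * Γ)ᵀ * residualMaker X * (D * Γ)).det) :
    w ⬝ᵥ (Γ *ᵥ (olsCoeff (fromCols X (D * Γ)) Y ∘ Sum.inr)) =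
      ((residualMaker X * D) *ᵥ
        (Γ *ᵥ (((D * Γ)ᵀ * residualMaker X * (D * Γ))⁻¹ *ᵥ (Γᵀ *ᵥ w)))) ⬝ᵥ Y := by
  rw [frisch_waugh_lovell X _ Y hX hS]
  set S := (D * Γ)ᵀ * residualMaker X * (D * Γ) with hS_def
  have hSymm : S⁻¹ᵀ = S⁻¹ := by
    rw [transpose_nonsing_inv, hS_def]
    simp only [transpose_mul, transpose_transpose, transpose_residualMaker, Matrix.mul_assoc]
  simp only [mulVec_mulVec]
  rw [dotProduct_mulVec, ← mulVec_transpose]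
  simp only [transpose_mul, transpose_transpose, transpose_residualMaker, hSymm, Matrix.mul_assoc]

end Regression

section TreatedUntreated

variable {n₁ n₀ p : Type*} [Fintype n₁] [Fintype n₀] [Fintype p] [DecidableEq n₁]
  [DecidableEq p]

theorem residualMaker_fromRows_mul_fromRows_one_zero [DecidableEq n₀] (Z₁ : Matrix n₁ p R)
    (Z₀ : Matrix n₀ p R) :
    residualMaker (fromRows Z₁ Z₀) * fromRows (1 : Matrix n₁ n₁ R) (0 : Matrix n₀ n₁ R) =
      fromRows (1 - Z₁ * (Z₁ᵀ * Z₁ + Z₀ᵀ * Z₀)⁻¹ * Z₁ᵀ)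
        (-(Z₀ * (Z₁ᵀ * Z₁ + Z₀ᵀ * Z₀)⁻¹ * Z₁ᵀ)) := by
  have hgram : (fromRows Z₁ Z₀)ᵀ * fromRows Z₁ Z₀ = Z₁ᵀ * Z₁ + Z₀ᵀ * Z₀ := by
    rw [transpose_fromRows, fromCols_mul_fromRows]
  have hsel : (fromRows Z₁ Z₀)ᵀ * fromRows (1 : Matrix n₁ n₁ R) (0 : Matrix n₀ n₁ R) = Z₁ᵀ := by
    rw [transpose_fromRows, fromCols_mul_fromRows, Matrix.mul_one, Matrix.mul_zero, add_zero]
  rw [residualMaker, hgram, Matrix.sub_mul, Matrix.one_mul, Matrix.mul_assoc, hsel,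
    fromRows_mul]
  ext (i | i) j <;> simp [Matrix.mul_assoc]

theorem inv_gram_mul_transpose_mul_residual (Z₁ : Matrix n₁ p R) (Z₀ : Matrix n₀ p R)
    (hZ : IsUnit (Z₁ᵀ * Z₁ + Z₀ᵀ * Z₀).det) (hZ₀ : IsUnit (Z₀ᵀ * Z₀).det) :
    (Z₀ᵀ * Z₀)⁻¹ * Z₁ᵀ * (1 - Z₁ * (Z₁ᵀ * Z₁ + Z₀ᵀ * Z₀)⁻¹ * Z₁ᵀ) =
      (Z₁ᵀ * Z₁ + Z₀ᵀ * Z₀)⁻¹ * Z₁ᵀ := by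
  set A := Z₁ᵀ * Z₁ + Z₀ᵀ * Z₀ with hA
  have hZ₁ : Z₁ᵀ * (1 - Z₁ * A⁻¹ * Z₁ᵀ) = Z₀ᵀ * Z₀ * (A⁻¹ * Z₁ᵀ) :=
    calc Z₁ᵀ * (1 - Z₁ * A⁻¹ * Z₁ᵀ) = A * (A⁻¹ * Z₁ᵀ) - Z₁ᵀ * Z₁ * (A⁻¹ * Z₁ᵀ) := by
          rw [mul_nonsing_inv_cancel_left _ _ hZ, Matrix.mul_sub, Matrix.mul_one]
          simp only [Matrix.mul_assoc]
      _ = Z₀ᵀ * Z₀ * (A⁻¹ * Z₁ᵀ) := by rw [hA, Matrix.add_mul, add_sub_cancel_left]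
  rw [Matrix.mul_assoc, hZ₁, nonsing_inv_mul_cancel_left _ _ hZ₀]

theorem neg_mul_inv_gram_mul_transpose_mul_inv_residual (Z₁ : Matrix n₁ p R) (Z₀ : Matrix n₀ p R)
    (hZ : IsUnit (Z₁ᵀ * Z₁ + Z₀ᵀ * Z₀).det) (hZ₀ : IsUnit (Z₀ᵀ * Z₀).det)
    (hB : IsUnit (1 - Z₁ * (Z₁ᵀ * Z₁ + Z₀ᵀ * Z₀)⁻¹ * Z₁ᵀ).det) :
    -(Z₀ * (Z₁ᵀ * Z₁ + Z₀ᵀ * Z₀)⁻¹ * Z₁ᵀ) * (1 - Z₁ * (Z₁ᵀ * Z₁ + Z₀ᵀ * Z₀)⁻¹ * Z₁ᵀ)⁻¹ =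
      -(Z₀ * (Z₀ᵀ * Z₀)⁻¹ * Z₁ᵀ) := by
  rw [Matrix.mul_assoc Z₀, ← inv_gram_mul_transpose_mul_residual Z₁ Z₀ hZ hZ₀,
    ← Matrix.mul_assoc Z₀, Matrix.neg_mul, mul_nonsing_inv_cancel_right _ _ hB, Matrix.mul_assoc Z₀]

end TreatedUntreated

theorem mul_inv_transpose_mul_mul_mul_transpose {n k : Type*} [Fintype n] [Fintype k]
    [DecidableEq n] [DecidableEq k] {Γ : Matrix n k R} {Γi : Matrix k n R} (h₁ : Γ * Γi = 1)
    (h₂ : Γi * Γ = 1) {B : Matrix n n R} (hB : IsUnit B.det) :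
    Γ * (Γᵀ * B * Γ)⁻¹ * Γᵀ = B⁻¹ := by
  have hΓt : Γᵀ * Γiᵀ = 1 := by rw [← transpose_mul, h₂, transpose_one]
  have hinv : (Γᵀ * B * Γ)⁻¹ = Γi * B⁻¹ * Γiᵀ := by
    refine inv_eq_right_inv ?_
    calc Γᵀ * B * Γ * (Γi * B⁻¹ * Γiᵀ) = Γᵀ * (B * (Γ * Γi) * B⁻¹) * Γiᵀ := by
          simp only [Matrix.mul_assoc]
      _ = 1 := by rw [h₁, Matrix.mul_one, mul_nonsing_inv _ hB, Matrix.mul_one, hΓt]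
  have hΓit : Γiᵀ * Γᵀ = 1 := by rw [← transpose_mul, h₁, transpose_one]
  calc Γ * (Γᵀ * B * Γ)⁻¹ * Γᵀ = (Γ * Γi) * B⁻¹ * (Γiᵀ * Γᵀ) := by
        rw [hinv]
        simp only [Matrix.mul_assoc]
    _ = B⁻¹ := by rw [h₁, hΓit, Matrix.one_mul, Matrix.mul_one]

end Matrix

theorem efficient_estimator_weights_general_general (N₁ N₀ p k : ℕ)
    (Z₁ : Matrix (Fin N₁) (Fin p) ℝ) (Z₀ : Matrix (Fin N₀) (Fin p) ℝ)
    (Z : Matrix (Fin N₁ ⊕ Fin N₀) (Fin p) ℝ) (hZ : Z = Matrix.of (Sum.elim Z₁ Z₀))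
    (D : Matrix (Fin N₁ ⊕ Fin N₀) (Fin N₁) ℝ)
    (hD : ∀ r j, D r j = if r = Sum.inl j then 1 else 0)
    (Γ : Matrix (Fin N₁) (Fin k) ℝ) (w₁ : Fin N₁ → ℝ)
    (G : Matrix (Fin N₁ ⊕ Fin N₀) (Fin p ⊕ Fin k) ℝ)
    (hG : G = Matrix.fromCols Z (D * Γ))
    (B₁ : Matrix (Fin N₁) (Fin N₁) ℝ)
    (hB₁ : B₁ = 1 - Z₁ * (Zᵀ * Z)⁻¹ * Z₁ᵀ)
    (B₀ : Matrix (Fin N₀) (Fin N₁) ℝ)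
    (hB₀ : B₀ = -(Z₀ * (Zᵀ * Z)⁻¹ * Z₁ᵀ))
    (hZZ : IsUnit (Zᵀ * Z).det)
    (hB₁inv : IsUnit B₁.det)
    (hZ₀ : IsUnit (Z₀ᵀ * Z₀).det)
    (hΓB : IsUnit (Γᵀ * B₁ * Γ).det)
    (u : Fin N₁ → ℝ)
    (hu : u = Γ *ᵥ ((Γᵀ * B₁ * Γ)⁻¹ *ᵥ (Γᵀ *ᵥ w₁)))
    (vstar : Fin N₁ ⊕ Fin N₀ → ℝ)
    (hvstar : vstar = Sum.elim (B₁ *ᵥ u) (B₀ *ᵥ u)) :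
    -- (a) weight representation of the OLS estimator τ̂_w* = w₁'Γθ̂:
    (∀ (Y : Fin N₁ ⊕ Fin N₀ → ℝ) (θhat : Fin k → ℝ)
      (_ : θhat = fun j => ((Gᵀ * G)⁻¹ *ᵥ (Gᵀ *ᵥ Y)) (Sum.inr j)),
      w₁ ⬝ᵥ (Γ *ᵥ θhat) = vstar ⬝ᵥ Y) ∧
    -- (b) the key algebraic identity:
    B₀ * B₁⁻¹ = -(Z₀ * (Z₀ᵀ * Z₀)⁻¹ * Z₁ᵀ) ∧
    -- (c) simplification when Γ is invertible:
    ((∃ Γi : Matrix (Fin k) (Fin N₁) ℝ, Γ * Γi = 1 ∧ Γi * Γ = 1) →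
      B₁ *ᵥ u = w₁ ∧ B₀ *ᵥ u = -(Z₀ *ᵥ ((Z₀ᵀ * Z₀)⁻¹ *ᵥ (Z₁ᵀ *ᵥ w₁)))) := by
  have hZr : Z = fromRows Z₁ Z₀ := hZ
  have hDr : D = fromRows 1 0 := by
    ext (i | i) j <;> simp [hD, one_apply, eq_comm]
  have hgram : Zᵀ * Z = Z₁ᵀ * Z₁ + Z₀ᵀ * Z₀ := by
    rw [hZr, transpose_fromRows, fromCols_mul_fromRows]
  rw [hgram] at hB₁ hB₀
  have hMD : residualMaker Z * D = fromRows B₁ B₀ := by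
    rw [hB₁, hB₀, hZr, hDr]
    exact residualMaker_fromRows_mul_fromRows_one_zero Z₁ Z₀
  have hS : (D * Γ)ᵀ * residualMaker Z * (D * Γ) = Γᵀ * B₁ * Γ := by
    simp only [transpose_mul, Matrix.mul_assoc]
    rw [← Matrix.mul_assoc (residualMaker Z), hMD, hDr, transpose_fromRows,
      ← Matrix.mul_assoc _ (fromRows B₁ B₀), fromCols_mul_fromRows]
    simp only [transpose_one, transpose_zero, Matrix.one_mul, Matrix.zero_mul, add_zero]
  have hb : B₀ * B₁⁻¹ = -(Z₀ * (Z₀ᵀ * Z₀)⁻¹ * Z₁ᵀ) := by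
    rw [hB₀, hB₁]
    exact neg_mul_inv_gram_mul_transpose_mul_inv_residual Z₁ Z₀ (hgram ▸ hZZ) hZ₀ (hB₁ ▸ hB₁inv)
  refine ⟨fun Y θhat hθ => ?_, hb, fun ⟨Γi, h₁, h₂⟩ => ?_⟩
  · have hθ' : θhat = olsCoeff (fromCols Z (D * Γ)) Y ∘ Sum.inr := by
      rw [hθ, hG]
      rfl
    rw [hθ', dotProduct_mulVec_olsCoeff_inr Z D Γ w₁ Y hZZ (hS ▸ hΓB), hS, ← hu, hMD,
      fromRows_mulVec, hvstar]
  · have hu' : u = B₁⁻¹ *ᵥ w₁ := by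
      rw [hu, mulVec_mulVec, mulVec_mulVec,
        mul_inv_transpose_mul_mul_mul_transpose h₁ h₂ hB₁inv]
    refine ⟨by rw [hu', mulVec_mulVec, mul_nonsing_inv _ hB₁inv, one_mulVec], ?_⟩
    rw [hu', mulVec_mulVec, hb, neg_mulVec]
    simp only [mulVec_mulVec, Matrix.mul_assoc]

/-- Weight representation of the OLS-based efficient estimator under a
treatment-effect model `τ = Γθ`.  With stacked covariates `Z = (Z₁; Z₀)`,
selection matrix `D` picking the treated rows, design `G = (Z, DΓ)` of full
column rank, `B₁ = I − Z₁(Z'Z)⁻¹Z₁'` and `B₀ = −Z₀(Z'Z)⁻¹Z₁'`, the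
estimator `τ̂_w* = w₁'Γθ̂` (OLS `θ̂`) has weight vector
`v* = (B₁; B₀) Γ (Γ'B₁Γ)⁻¹ Γ' w₁`.  Moreover, if `Γ` is invertible, then
`B₀B₁⁻¹ = −Z₀(Z₀'Z₀)⁻¹Z₁'`, so the weights simplify to `v₁* = w₁` and
`v₀* = −Z₀(Z₀'Z₀)⁻¹Z₁'w₁`. -/
theorem efficient_estimator_weights_general (N₁ N₀ p k : ℕ)
    (Z₁ : Matrix (Fin N₁) (Fin p) ℝ) (Z₀ : Matrix (Fin N₀) (Fin p) ℝ)
    (Z : Matrix (Fin N₁ ⊕ Fin N₀) (Fin p) ℝ) (hZ : Z = Matrix.of (Sum.elim Z₁ Z₀))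
    (D : Matrix (Fin N₁ ⊕ Fin N₀) (Fin N₁) ℝ)
    (hD : ∀ r j, D r j = if r = Sum.inl j then 1 else 0)
    (Γ : Matrix (Fin N₁) (Fin k) ℝ) (w₁ : Fin N₁ → ℝ)
    (G : Matrix (Fin N₁ ⊕ Fin N₀) (Fin p ⊕ Fin k) ℝ)
    (hG : G = Matrix.fromCols Z (D * Γ))
    (hrank : IsUnit (Gᵀ * G).det)
    (B₁ : Matrix (Fin N₁) (Fin N₁) ℝ)
    (hB₁ : B₁ = 1 - Z₁ * (Zᵀ * Z)⁻¹ * Z₁ᵀ)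
    (B₀ : Matrix (Fin N₀) (Fin N₁) ℝ)
    (hB₀ : B₀ = -(Z₀ * (Zᵀ * Z)⁻¹ * Z₁ᵀ))
    (hZZ : IsUnit (Zᵀ * Z).det)
    (hB₁inv : IsUnit B₁.det)
    (hZ₀ : IsUnit (Z₀ᵀ * Z₀).det)
    (hΓB : IsUnit (Γᵀ * B₁ * Γ).det)
    (u : Fin N₁ → ℝ)
    (hu : u = Γ *ᵥ ((Γᵀ * B₁ * Γ)⁻¹ *ᵥ (Γᵀ *ᵥ w₁)))
    (vstar : Fin N₁ ⊕ Fin N₀ → ℝ)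
    (hvstar : vstar = Sum.elim (B₁ *ᵥ u) (B₀ *ᵥ u)) :
    -- (a) weight representation of the OLS estimator τ̂_w* = w₁'Γθ̂:
    (∀ (Y : Fin N₁ ⊕ Fin N₀ → ℝ) (θhat : Fin k → ℝ)
      (_ : θhat = fun j => ((Gᵀ * G)⁻¹ *ᵥ (Gᵀ *ᵥ Y)) (Sum.inr j)),
      w₁ ⬝ᵥ (Γ *ᵥ θhat) = vstar ⬝ᵥ Y) ∧
    -- (b) the key algebraic identity:
    B₀ * B₁⁻¹ = -(Z₀ * (Z₀ᵀ * Z₀)⁻¹ * Z₁ᵀ) ∧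
    -- (c) simplification when Γ is invertible:
    ((∃ Γi : Matrix (Fin k) (Fin N₁) ℝ, Γ * Γi = 1 ∧ Γi * Γ = 1) →
      B₁ *ᵥ u = w₁ ∧ B₀ *ᵥ u = -(Z₀ *ᵥ ((Z₀ᵀ * Z₀)⁻¹ *ᵥ (Z₁ᵀ *ᵥ w₁)))) :=
  efficient_estimator_weights_general_general N₁ N₀ p k Z₁ Z₀ Z hZ D hD Γ w₁ G hG B₁ hB₁ B₀ hB₀ hZZ
    hB₁inv hZ₀ hΓB u hu vstar hvstar
end

section
/- (Equal sensitivity to linear anticipation trends.) Let τ̂_w = Σ_{it} v_it Y_it be any linear estimator that is unbiased for τ_w = Σ_{it∈Ω₁} w_it τ_it under the two-way fixed effects model with unrestricted treatment effects and no never-treated units. If the data are generated as Y_it = (κ₀ + κ₁K_it)·1[D_it = 0] for constants κ₀, κ₁, then E[τ̂_w] = −Σ_{it∈Ω₁} w_it(κ₀ + κ₁K_it). In particular, all such robust linear unbiased estimators have identical bias under linear anticipation trends. -/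
open Finset

/-! The anticipation outcome `(κ₀ + κ₁ K_it)·1[D_it = 0]` is itself a two-way fixed effects mean:
with `α_i = κ₀ − κ₁ E_i`, `β_t = κ₁ t` and `τ_it = −(κ₀ + κ₁ K_it)` we have
`α_i + β_t = κ₀ + κ₁ K_it`, which cancels against `τ_it D_it` on treated cells. Unbiasedness
therefore forces every such estimator to return `Σ_{Ω₁} w_it τ_it`. -/

lemma linear_trend_untreated_eq_twfe (κ₀ κ₁ : ℝ) (e t : ℤ) :
    (κ₀ + κ₁ * ((t - e : ℤ) : ℝ)) * (if t < e then 1 else 0)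
      = (κ₀ - κ₁ * e) + κ₁ * t
          + -(κ₀ + κ₁ * ((t - e : ℤ) : ℝ)) * (if e ≤ t then 1 else 0) := by
  by_cases hte : e ≤ t
  · simp only [if_pos hte, if_neg (not_lt.mpr hte)]
    push_cast
    ring
  · simp only [if_neg hte, if_pos (not_le.mp hte)]
    push_cast
    ring

theorem equal_sensitivity_linear_pretrends_general {ι : Type*}
    (Ω : Finset (ι × ℤ)) (E : ι → ℤ)
    (D : ι → ℤ → ℝ) (hD : ∀ i t, D i t = if E i ≤ t then 1 else 0)
    (Ω₁ : Finset (ι × ℤ))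
    (v w : ι → ℤ → ℝ)
    (hunbiased : ∀ (α : ι → ℝ) (β : ℤ → ℝ) (τ : ι → ℤ → ℝ),
      ∑ p ∈ Ω, v p.1 p.2 * (α p.1 + β p.2 + τ p.1 p.2 * D p.1 p.2)
        = ∑ p ∈ Ω₁, w p.1 p.2 * τ p.1 p.2)
    (κ₀ κ₁ : ℝ) :
    ∑ p ∈ Ω, v p.1 p.2 *
        ((κ₀ + κ₁ * ((p.2 - E p.1 : ℤ) : ℝ)) * (if p.2 < E p.1 then 1 else 0))
      = -∑ p ∈ Ω₁, w p.1 p.2 * (κ₀ + κ₁ * ((p.2 - E p.1 : ℤ) : ℝ)) := by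
  have hmodel := hunbiased (fun i => κ₀ - κ₁ * E i) (fun t => κ₁ * t)
    (fun i t => -(κ₀ + κ₁ * ((t - E i : ℤ) : ℝ)))
  simp only [hD, ← linear_trend_untreated_eq_twfe, mul_neg, sum_neg_distrib] at hmodel
  exact hmodel

/-- Equal sensitivity of all robust linear unbiased estimators to linear
anticipation trends.  Let `τ̂_w = Σ_{(i,t)∈Ω} v_it Y_it` be linear and
unbiased for `τ_w = Σ_{(i,t)∈Ω₁} w_it τ_it` under the two-way fixed effects
model with unrestricted treatment effects: whenever
`E[Y_it] = α_i + β_t + τ_it D_it` (with `D_it = 1[t ≥ E_i]`, all event dates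
finite), `E[τ̂_w] = τ_w`, for all `(α, β, τ)`.  If instead the mean outcomes
are `E[Y_it] = (κ₀ + κ₁ K_it)·1[D_it = 0]` with `K_it = t − E_i`, then
`E[τ̂_w] = −Σ_{(i,t)∈Ω₁} w_it (κ₀ + κ₁ K_it)`. -/
theorem equal_sensitivity_linear_pretrends {ι : Type*} [DecidableEq ι]
    (Ω : Finset (ι × ℤ)) (E : ι → ℤ)
    (D : ι → ℤ → ℝ) (hD : ∀ i t, D i t = if E i ≤ t then 1 else 0)
    (Ω₁ : Finset (ι × ℤ)) (hΩ₁ : Ω₁ = Ω.filter (fun p => E p.1 ≤ p.2))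
    (v w : ι → ℤ → ℝ)
    (hunbiased : ∀ (α : ι → ℝ) (β : ℤ → ℝ) (τ : ι → ℤ → ℝ),
      ∑ p ∈ Ω, v p.1 p.2 * (α p.1 + β p.2 + τ p.1 p.2 * D p.1 p.2)
        = ∑ p ∈ Ω₁, w p.1 p.2 * τ p.1 p.2)
    (κ₀ κ₁ : ℝ) :
    ∑ p ∈ Ω, v p.1 p.2 *
        ((κ₀ + κ₁ * ((p.2 - E p.1 : ℤ) : ℝ)) * (if p.2 < E p.1 then 1 else 0))
      = -∑ p ∈ Ω₁, w p.1 p.2 * (κ₀ + κ₁ * ((p.2 - E p.1 : ℤ) : ℝ)) :=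
  equal_sensitivity_linear_pretrends_general Ω E D hD Ω₁ v w hunbiased κ₀ κ₁
end

section
/- (Pre-test independence under homoskedasticity.) Suppose Y = Zπ + Dτ + ε with Var(ε) = σ²I. Let τ̂_w* be the efficient linear unbiased estimator of some weighted treatment-effect estimand (constructed under some treatment-effect model Γ), and let γ̂ be the OLS coefficient vector on extra regressors W in a regression of Y₀ on (Z₀, W₀) using untreated observations only. If the true data satisfy E[Y₀] = Z₀π (so E[γ̂] = 0 whenever γ is identified), then Cov(τ̂_w*, γ̂) = 0. -/
/-!
Both estimators are linear in `Y`: `τ̂ = a ⬝ᵥ Y` and `γ̂_l = b_l ⬝ᵥ Y`, where `b_l` vanishes on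
the treated rows. Under `Var(Y) = σ²I` their covariance is therefore `σ² (a ⬝ᵥ b_l)`. Since the
treatment columns `DΓ` vanish on the untreated rows, the untreated block of `a = G u` is `Z₀`
applied to the `Z`-block of `u`, and the OLS coefficients on `W₀` annihilate every vector `Z₀ v` because `(Z₀, W₀)` fits it
exactly with zero weight on `W₀`. Applied to `E[Y₀] = Z₀π`, the same fact gives `E[γ̂] = 0`.
-/

open MeasureTheory Matrix ProbabilityTheory

namespace Matrix

variable {R m n : Type*} [Fintype m] [Fintype n]

section Semiring

variable [Semiring R]

theorem sumElim_zero_dotProduct (u : n → R) (x : m ⊕ n → R) :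
    Sum.elim 0 u ⬝ᵥ x = u ⬝ᵥ (x ∘ Sum.inr) := by
  conv_lhs => rw [← Sum.elim_comp_inl_inr x]
  rw [sumElim_dotProduct_sumElim, zero_dotProduct, zero_add]

theorem fromCols_fromRows_mulVec_comp_inr {m₁ m₂ n₁ n₂ : Type*} [Fintype n₁] [Fintype n₂]
    (A₁ : Matrix m₁ n₁ R) (A₂ : Matrix m₂ n₁ R) {T : Matrix (m₁ ⊕ m₂) n₂ R}
    (hT : ∀ s, T (Sum.inr s) = 0) (u : n₁ ⊕ n₂ → R) :
    (fromCols (fromRows A₁ A₂) T *ᵥ u) ∘ Sum.inr = A₂ *ᵥ (u ∘ Sum.inl) := by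
  funext s
  simp [mulVec, hT s]

end Semiring

variable [CommRing R] [DecidableEq n]

noncomputable def olsMatrix (G : Matrix m n R) : Matrix n m R := (Gᵀ * G)⁻¹ * Gᵀ

theorem olsMatrix_mul_self {G : Matrix m n R} (hG : IsUnit (Gᵀ * G).det) :
    olsMatrix G * G = 1 := by
  rw [olsMatrix, Matrix.mul_assoc, nonsing_inv_mul _ hG]

theorem olsMatrix_mulVec_mulVec_self {G : Matrix m n R} (hG : IsUnit (Gᵀ * G).det) (x : n → R) :
    olsMatrix G *ᵥ (G *ᵥ x) = x := by
  rw [mulVec_mulVec, olsMatrix_mul_self hG, one_mulVec]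

theorem olsMatrix_fromCols_mulVec_left {n₁ n₂ : Type*} [Fintype n₁] [Fintype n₂]
    [DecidableEq n₁] [DecidableEq n₂] {A : Matrix m n₁ R} {B : Matrix m n₂ R}
    (h : IsUnit ((fromCols A B)ᵀ * fromCols A B).det) (v : n₁ → R) :
    olsMatrix (fromCols A B) *ᵥ (A *ᵥ v) = Sum.elim v 0 := by
  have hA : A *ᵥ v = fromCols A B *ᵥ Sum.elim v 0 := by simp
  rw [hA, olsMatrix_mulVec_mulVec_self h]

theorem vecMul_olsMatrix (G : Matrix m n R) (c : n → R) :
    c ᵥ* olsMatrix G = G *ᵥ (c ᵥ* (Gᵀ * G)⁻¹) := by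
  rw [olsMatrix, ← vecMul_vecMul, vecMul_transpose]

end Matrix

namespace ProbabilityTheory

variable {Ω ι : Type*} [MeasurableSpace Ω] {μ : Measure Ω} [Fintype ι] {Y : Ω → ι → ℝ}

theorem integral_dotProduct (hY : ∀ i, Integrable (fun ω => Y ω i) μ) (a : ι → ℝ) :
    ∫ ω, a ⬝ᵥ Y ω ∂μ = a ⬝ᵥ fun i => ∫ ω, Y ω i ∂μ := by
  simp only [dotProduct]
  rw [integral_finsetSum _ fun i _ => (hY i).const_mul (a i)]
  simp only [integral_const_mul]

theorem covariance_dotProduct_dotProduct [IsFiniteMeasure μ]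
    (hY : ∀ i, MemLp (fun ω => Y ω i) 2 μ) (a b : ι → ℝ) :
    cov[fun ω => a ⬝ᵥ Y ω, fun ω => b ⬝ᵥ Y ω; μ]
      = ∑ i, ∑ j, a i * b j * cov[fun ω => Y ω i, fun ω => Y ω j; μ] := by
  simp only [dotProduct]
  rw [covariance_fun_sum_fun_sum (fun i => (hY i).const_mul (a i))
    (fun j => (hY j).const_mul (b j))]
  simp only [covariance_const_mul_left, covariance_const_mul_right]
  exact Finset.sum_congr rfl fun i _ => Finset.sum_congr rfl fun j _ => by ring

theorem covariance_dotProduct_dotProduct_of_isotropic [IsFiniteMeasure μ] [DecidableEq ι]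
    (hY : ∀ i, MemLp (fun ω => Y ω i) 2 μ)
    {σ2 : ℝ} (hcov : ∀ i j, cov[fun ω => Y ω i, fun ω => Y ω j; μ] = if i = j then σ2 else 0)
    (a b : ι → ℝ) :
    cov[fun ω => a ⬝ᵥ Y ω, fun ω => b ⬝ᵥ Y ω; μ] = σ2 * (a ⬝ᵥ b) := by
  rw [covariance_dotProduct_dotProduct hY]
  simp only [hcov, mul_ite, mul_zero, Finset.sum_ite_eq, Finset.mem_univ, if_true, dotProduct,
    Finset.mul_sum]
  exact Finset.sum_congr rfl fun i _ => by ring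

end ProbabilityTheory

theorem pretest_uncorrelated_general {Ωm : Type*} [MeasurableSpace Ωm]
    (μ : Measure Ωm) [IsProbabilityMeasure μ]
    (N₁ N₀ p k q : ℕ)
    (Z₁ : Matrix (Fin N₁) (Fin p) ℝ) (Z₀ : Matrix (Fin N₀) (Fin p) ℝ)
    (Z : Matrix (Fin N₁ ⊕ Fin N₀) (Fin p) ℝ) (hZ : Z = Matrix.of (Sum.elim Z₁ Z₀))
    (D : Matrix (Fin N₁ ⊕ Fin N₀) (Fin N₁) ℝ)
    (hD : ∀ r j, D r j = if r = Sum.inl j then 1 else 0)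
    (Γ : Matrix (Fin N₁) (Fin k) ℝ) (w₁ : Fin N₁ → ℝ)
    (G : Matrix (Fin N₁ ⊕ Fin N₀) (Fin p ⊕ Fin k) ℝ)
    (hG : G = Matrix.fromCols Z (D * Γ))
    (W₀ : Matrix (Fin N₀) (Fin q) ℝ)
    (G₀ : Matrix (Fin N₀) (Fin p ⊕ Fin q) ℝ)
    (hG₀ : G₀ = Matrix.fromCols Z₀ W₀)
    (hrank₀ : IsUnit (G₀ᵀ * G₀).det)
    -- the random outcomes: mean vector `m`, homoskedastic uncorrelated errors
    (Y : Ωm → (Fin N₁ ⊕ Fin N₀) → ℝ) (m : (Fin N₁ ⊕ Fin N₀) → ℝ) (σ2 : ℝ)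
    (hL2 : ∀ r, MemLp (fun ω => Y ω r) 2 μ)
    (hmean : ∀ r, ∫ ω, Y ω r ∂μ = m r)
    (hcov : ∀ r s, ∫ ω, (Y ω r - m r) * (Y ω s - m s) ∂μ
        = if r = s then σ2 else 0)
    -- the maintained model on the untreated observations: E[Y₀] = Z₀π
    (π : Fin p → ℝ) (hmodel : ∀ r : Fin N₀, m (Sum.inr r) = (Z₀ *ᵥ π) r)
    -- the efficient estimator τ̂_w* = w₁'Γθ̂ with θ̂ from the full OLS
    (τhat : Ωm → ℝ)
    (hτhat : ∀ ω, τhat ω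
      = w₁ ⬝ᵥ (Γ *ᵥ fun j => ((Gᵀ * G)⁻¹ *ᵥ (Gᵀ *ᵥ Y ω)) (Sum.inr j))
    -- the pre-trend coefficients γ̂ from untreated observations only
    ) (γhat : Ωm → Fin q → ℝ)
    (hγhat : ∀ ω l, γhat ω l
      = ((G₀ᵀ * G₀)⁻¹ *ᵥ (G₀ᵀ *ᵥ fun r => Y ω (Sum.inr r))) (Sum.inr l)) :
    (∀ l, ∫ ω, γhat ω l ∂μ = 0) ∧
    ∀ l, ∫ ω, (τhat ω - ∫ ω', τhat ω' ∂μ)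
        * (γhat ω l - ∫ ω', γhat ω' l ∂μ) ∂μ = 0 := by
  rw [show of (Sum.elim Z₁ Z₀) = fromRows Z₁ Z₀ from rfl] at hZ
  subst hG hG₀ hZ
  set H₀ := olsMatrix (fromCols Z₀ W₀)
  set a := Sum.elim 0 (w₁ ᵥ* Γ) ᵥ* olsMatrix (fromCols (fromRows Z₁ Z₀) (D * Γ))
  set b : Fin q → Fin N₁ ⊕ Fin N₀ → ℝ := fun l => Sum.elim 0 (H₀ (Sum.inr l))
  have hτ : ∀ ω, τhat ω = a ⬝ᵥ Y ω := by
    intro ω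
    rw [← dotProduct_mulVec, olsMatrix, ← mulVec_mulVec, sumElim_zero_dotProduct,
      ← dotProduct_mulVec, hτhat]
    rfl
  have hγ : ∀ ω l, γhat ω l = b l ⬝ᵥ Y ω := by
    intro ω l
    rw [hγhat, mulVec_mulVec]
    exact (sumElim_zero_dotProduct _ _).symm
  have hH₀ : ∀ v l, H₀ (Sum.inr l) ⬝ᵥ (Z₀ *ᵥ v) = 0 := fun v l =>
    congrFun (olsMatrix_fromCols_mulVec_left hrank₀ v) (Sum.inr l)
  have hb_m : ∀ l, b l ⬝ᵥ m = 0 := by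
    intro l
    rw [sumElim_zero_dotProduct, show m ∘ Sum.inr = Z₀ *ᵥ π from funext hmodel, hH₀]
  have hab : ∀ l, a ⬝ᵥ b l = 0 := by
    intro l
    have hDΓ : ∀ s, (D * Γ) (Sum.inr s) = 0 := fun s => by
      funext j
      simp [mul_apply, hD]
    obtain ⟨v, ha⟩ : ∃ v, a ∘ Sum.inr = Z₀ *ᵥ v := by
      simp only [a, vecMul_olsMatrix]
      exact ⟨_, fromCols_fromRows_mulVec_comp_inr _ _ hDΓ _⟩
    rw [dotProduct_comm, sumElim_zero_dotProduct, ha, hH₀]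
  have hcov' : ∀ r s, cov[fun ω => Y ω r, fun ω => Y ω s; μ] = if r = s then σ2 else 0 := by
    intro r s
    simp only [covariance, hmean]
    exact hcov r s
  have hY : ∀ r, Integrable (fun ω => Y ω r) μ := fun r => (hL2 r).integrable one_le_two
  refine ⟨fun l => ?_, fun l => ?_⟩
  · rw [← hb_m l, show m = fun r => ∫ ω, Y ω r ∂μ from funext fun r => (hmean r).symm,
      ← integral_dotProduct hY]
    simp only [hγ]
  · change cov[fun ω => τhat ω, fun ω => γhat ω l; μ] = 0
    simp only [hτ, hγ]
    rw [covariance_dotProduct_dotProduct_of_isotropic hL2 hcov', hab, mul_zero]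

/-- Pre-test independence under homoskedasticity.  In the model
`Y = Zπ + DΓθ + ε` with `Var(ε) = σ²I` (rows split into treated `Fin N₁` and
untreated `Fin N₀` blocks, `D` selecting treated rows, full design
`G = (Z, DΓ)` of full column rank), let `τ̂_w* = w₁'Γθ̂` be the efficient
linear unbiased estimator, and let `γ̂` be the OLS coefficient vector on the
extra regressors `W₀` in a regression of `Y₀` on `(Z₀, W₀)` using untreated
observations only (design `G₀ = (Z₀, W₀)` of full column rank).  If the true
means satisfy `E[Y₀] = Z₀π` (so `E[γ̂] = 0`), then `Cov(τ̂_w*, γ̂_l) = 0` for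
every component `l`. -/
theorem pretest_uncorrelated {Ωm : Type*} [MeasurableSpace Ωm]
    (μ : Measure Ωm) [IsProbabilityMeasure μ]
    (N₁ N₀ p k q : ℕ)
    (Z₁ : Matrix (Fin N₁) (Fin p) ℝ) (Z₀ : Matrix (Fin N₀) (Fin p) ℝ)
    (Z : Matrix (Fin N₁ ⊕ Fin N₀) (Fin p) ℝ) (hZ : Z = Matrix.of (Sum.elim Z₁ Z₀))
    (D : Matrix (Fin N₁ ⊕ Fin N₀) (Fin N₁) ℝ)
    (hD : ∀ r j, D r j = if r = Sum.inl j then 1 else 0)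
    (Γ : Matrix (Fin N₁) (Fin k) ℝ) (w₁ : Fin N₁ → ℝ)
    (G : Matrix (Fin N₁ ⊕ Fin N₀) (Fin p ⊕ Fin k) ℝ)
    (hG : G = Matrix.fromCols Z (D * Γ))
    (hrank : IsUnit (Gᵀ * G).det)
    (W₀ : Matrix (Fin N₀) (Fin q) ℝ)
    (G₀ : Matrix (Fin N₀) (Fin p ⊕ Fin q) ℝ)
    (hG₀ : G₀ = Matrix.fromCols Z₀ W₀)
    (hrank₀ : IsUnit (G₀ᵀ * G₀).det)
    -- the random outcomes: mean vector `m`, homoskedastic uncorrelated errors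
    (Y : Ωm → (Fin N₁ ⊕ Fin N₀) → ℝ) (m : (Fin N₁ ⊕ Fin N₀) → ℝ) (σ2 : ℝ)
    (hL2 : ∀ r, MemLp (fun ω => Y ω r) 2 μ)
    (hmean : ∀ r, ∫ ω, Y ω r ∂μ = m r)
    (hcov : ∀ r s, ∫ ω, (Y ω r - m r) * (Y ω s - m s) ∂μ
        = if r = s then σ2 else 0)
    -- the maintained model on the untreated observations: E[Y₀] = Z₀π
    (π : Fin p → ℝ) (hmodel : ∀ r : Fin N₀, m (Sum.inr r) = (Z₀ *ᵥ π) r)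
    -- the efficient estimator τ̂_w* = w₁'Γθ̂ with θ̂ from the full OLS
    (τhat : Ωm → ℝ)
    (hτhat : ∀ ω, τhat ω
      = w₁ ⬝ᵥ (Γ *ᵥ fun j => ((Gᵀ * G)⁻¹ *ᵥ (Gᵀ *ᵥ Y ω)) (Sum.inr j))
    -- the pre-trend coefficients γ̂ from untreated observations only
    ) (γhat : Ωm → Fin q → ℝ)
    (hγhat : ∀ ω l, γhat ω l
      = ((G₀ᵀ * G₀)⁻¹ *ᵥ (G₀ᵀ *ᵥ fun r => Y ω (Sum.inr r))) (Sum.inr l)) :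
    (∀ l, ∫ ω, γhat ω l ∂μ = 0) ∧
    ∀ l, ∫ ω, (τhat ω - ∫ ω', τhat ω' ∂μ)
        * (γhat ω l - ∫ ω', γhat ω' l ∂μ) ∂μ = 0 :=
  pretest_uncorrelated_general μ N₁ N₀ p k q Z₁ Z₀ Z hZ D hD Γ w₁ G hG W₀ G₀ hG₀ hrank₀ Y m σ2 hL2
    hmean hcov π hmodel τhat hτhat γhat hγhat
end
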